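/- arXiv:1511.05898 — 2 statements merged into one kernel-verified Lean document; each statement's English description precedes it below -/
import Mathlib

section
/- Let $Z = K[X]/(X^k)$ with $k \ge 2$, $\varepsilon$ the class of $X$, $B$ a $Z$-algebra and $M$ a $B$-module which is free of finite rank as a $Z$-module. Then $M/\varepsilon M$ and $\varepsilon^{k-1} M$ are isomorphic as $B/(\varepsilon B)$-modules. -/
/-!
Multiplication by `ε ^ (k - 1)` is a `B`-linear endomorphism of `M` (scalars from `Z` are central
in `B`) whose image is `ε ^ (k - 1) M`. Its kernel is `εM`: in `Z` the annihilator of `ε ^ (k - 1)`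
is `(ε)`, and since `M` is free this passes to `M` coordinatewise. The first isomorphism theorem
then gives `M / εM ≃ ε ^ (k - 1) M`.
-/

open Polynomial

section SmulByScalar

variable {R B M : Type*} [CommRing R] [Ring B] [Algebra R B] [AddCommGroup M] [Module B M]
  [Module R M] [IsScalarTower R B M]

theorem span_setOf_eq_smul_eq_range_toLinearMap (r : R) :
    Submodule.span B {m : M | ∃ x : M, m = r • x} =
      LinearMap.range (DistribSMul.toLinearMap B M r) := by
  convert Submodule.span_eq (LinearMap.range (DistribSMul.toLinearMap B M r))
  ext m
  simp [eq_comm]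

theorem Module.Basis.ker_toLinearMap_eq_span {ι : Type*} (b : Module.Basis ι R M) {r s : R}
    (hr : ∀ c, r * c = 0 → s ∣ c) (hrs : r * s = 0) :
    LinearMap.ker (DistribSMul.toLinearMap B M r) =
      Submodule.span B {m : M | ∃ x : M, m = s • x} := by
  apply le_antisymm
  · intro m hm
    have hcoord : ∀ i, r * b.repr m i = 0 := fun i => by
      simpa using congrArg (fun x => b.repr x i) (show r • m = 0 from hm)
    choose d hd using fun i => hr _ (hcoord i)
    refine Submodule.subset_span ⟨∑ i ∈ (b.repr m).support, d i • b i, ?_⟩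
    conv_lhs => rw [← b.linearCombination_repr m]
    simp [Finsupp.linearCombination_apply, Finsupp.sum, Finset.smul_sum, smul_smul, ← hd]
  · rw [Submodule.span_le]
    rintro m ⟨x, rfl⟩
    show r • s • x = 0
    rw [smul_smul, hrs, zero_smul]

noncomputable def Module.Basis.quotientSpanSmulEquiv {ι : Type*} (b : Module.Basis ι R M)
    {r s : R} (hr : ∀ c, r * c = 0 → s ∣ c) (hrs : r * s = 0) :
    (M ⧸ Submodule.span B {m : M | ∃ x : M, m = s • x}) ≃ₗ[B]
      Submodule.span B {m : M | ∃ x : M, m = r • x} :=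
  (Submodule.quotEquivOfEq _ _ (b.ker_toLinearMap_eq_span hr hrs).symm).trans <|
    (LinearMap.quotKerEquivRange _).trans
      (LinearEquiv.ofEq _ _ (span_setOf_eq_smul_eq_range_toLinearMap r).symm)

end SmulByScalar

section TruncatedPolynomial

variable {R : Type*} [CommRing R] {k : ℕ}

theorem mk_X_pow_pred_mul_mk_X (hk : 1 ≤ k) :
    Ideal.Quotient.mk (Ideal.span {(X : R[X]) ^ k}) X ^ (k - 1) *
      Ideal.Quotient.mk (Ideal.span {(X : R[X]) ^ k}) X = 0 := by
  rw [← pow_succ, Nat.sub_add_cancel hk, ← map_pow, Ideal.Quotient.eq_zero_iff_dvd]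

theorem mk_X_dvd_of_mk_X_pow_pred_mul_eq_zero (hk : 1 ≤ k)
    {c : R[X] ⧸ Ideal.span {(X : R[X]) ^ k}}
    (hc : Ideal.Quotient.mk (Ideal.span {(X : R[X]) ^ k}) X ^ (k - 1) * c = 0) :
    Ideal.Quotient.mk (Ideal.span {(X : R[X]) ^ k}) X ∣ c := by
  obtain ⟨p, rfl⟩ := Ideal.Quotient.mk_surjective c
  rw [← map_pow, ← map_mul, Ideal.Quotient.eq_zero_iff_dvd] at hc
  obtain ⟨q, hq⟩ := hc
  have hp : p = X * q := by
    refine (isRegular_X_pow (k - 1)).left ?_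
    dsimp only
    rw [hq, ← mul_assoc, ← pow_succ, Nat.sub_add_cancel hk]
  exact ⟨Ideal.Quotient.mk _ q, by rw [hp, map_mul]⟩

end TruncatedPolynomial

/-- Let `Z = K[X]/(X^k)` (`k ≥ 2`), `ε` the class of `X`, `B` a
`Z`-algebra and `M` a `B`-module which is free of finite rank as a `Z`-module.
Then `M/εM` and `ε^(k-1)M` are isomorphic as `B`-modules (both are annihilated
by `ε`, so this is an isomorphism of `B/(εB)`-modules). -/
theorem stmt_6 (K : Type*) [Field K] (k : ℕ) (hk : 2 ≤ k)
    (ε : K[X] ⧸ Ideal.span {(X : K[X]) ^ k})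
    (hε : ε = Ideal.Quotient.mk (Ideal.span {(X : K[X]) ^ k}) X)
    (B : Type*) [Ring B] [Algebra (K[X] ⧸ Ideal.span {(X : K[X]) ^ k}) B]
    (M : Type*) [AddCommGroup M] [Module B M]
    [Module (K[X] ⧸ Ideal.span {(X : K[X]) ^ k}) M]
    [IsScalarTower (K[X] ⧸ Ideal.span {(X : K[X]) ^ k}) B M]
    (n : ℕ) (basis : Module.Basis (Fin n) (K[X] ⧸ Ideal.span {(X : K[X]) ^ k}) M)
    (εM εk1M : Submodule B M)
    (hεM : εM = Submodule.span B {m : M | ∃ x : M, m = ε • x})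
    (hεk1M : εk1M = Submodule.span B {m : M | ∃ x : M, m = ε ^ (k - 1) • x}) :
    Nonempty ((M ⧸ εM) ≃ₗ[B] εk1M) := by
  have hk1 : 1 ≤ k := by omega
  subst hεM hεk1M hε
  exact ⟨basis.quotientSpanSmulEquiv (fun _ => mk_X_dvd_of_mk_X_pow_pred_mul_eq_zero hk1)
    (mk_X_pow_pred_mul_mk_X hk1)⟩
end

section
/- Let $K$ be a field, $k \ge 1$, and $R = K[x]/(x^k)$. An $R$-submodule $U$ of a finite free $R$-module $M$ is free as an $R$-module if and only if the quotient $M/U$ is free as an $R$-module. -/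
set_option synthInstance.maxHeartbeats 1000000
set_option maxHeartbeats 1000000

open Polynomial

namespace Stmt8Aux

variable (K : Type*) [Field K] (k : ℕ)

/-- The truncated polynomial ring `K[x]/(x^k)`. -/
abbrev TR := K[X] ⧸ Ideal.span {(X : K[X]) ^ k}

/-- The image of `X` in `K[x]/(x^k)`. -/
noncomputable def xi : TR K k := Ideal.Quotient.mk _ X

lemma xi_pow : (xi K k) ^ k = 0 := by
  rw [xi, ← map_pow, Ideal.Quotient.eq_zero_iff_mem]
  exact Ideal.mem_span_singleton_self _

lemma mem_span_of_ann {j : ℕ} (hj : j ≤ k) {a : TR K k}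
    (ha : (xi K k) ^ (k - j) * a = 0) : a ∈ Ideal.span {(xi K k) ^ j} := by
  obtain ⟨p, rfl⟩ := Ideal.Quotient.mk_surjective a
  have hmem : (X : K[X]) ^ (k - j) * p ∈ Ideal.span {(X : K[X]) ^ k} := by
    rw [← Ideal.Quotient.eq_zero_iff_mem, map_mul, map_pow]
    exact ha
  rw [Ideal.mem_span_singleton] at hmem
  have hdvd : (X : K[X]) ^ j ∣ p := by
    have hX : (X : K[X]) ^ (k - j) ≠ 0 := pow_ne_zero _ X_ne_zero
    have h2 : (X : K[X]) ^ (k - j) * (X : K[X]) ^ j ∣ (X : K[X]) ^ (k - j) * p := by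
      rwa [← pow_add, Nat.sub_add_cancel hj]
    exact (mul_dvd_mul_iff_left hX).mp h2
  obtain ⟨q, rfl⟩ := hdvd
  rw [Ideal.mem_span_singleton]
  exact ⟨Ideal.Quotient.mk _ q, by rw [map_mul, map_pow]; rfl⟩

lemma ideal_eq (I : Ideal (TR K k)) : ∃ j ≤ k, I = Ideal.span {(xi K k) ^ j} := by
  have hsurj : Function.Surjective (Ideal.Quotient.mk (Ideal.span {(X : K[X]) ^ k})) :=
    Ideal.Quotient.mk_surjective
  set J := I.comap (Ideal.Quotient.mk (Ideal.span {(X : K[X]) ^ k})) with hJ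
  have hfd : Submodule.IsPrincipal.generator J ∣ (X : K[X]) ^ k := by
    rw [← Ideal.mem_span_singleton, Ideal.span_singleton_generator]
    show Ideal.Quotient.mk _ ((X : K[X]) ^ k) ∈ I
    have : (Ideal.Quotient.mk (Ideal.span {(X : K[X]) ^ k})) ((X : K[X]) ^ k) = 0 := by
      rw [Ideal.Quotient.eq_zero_iff_mem]; exact Ideal.mem_span_singleton_self _
    rw [this]; exact I.zero_mem
  obtain ⟨j, hj, hassoc⟩ := (dvd_prime_pow Polynomial.prime_X k).mp hfd
  refine ⟨j, hj, ?_⟩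
  have hI : I = J.map (Ideal.Quotient.mk (Ideal.span {(X : K[X]) ^ k})) :=
    (Ideal.map_comap_of_surjective _ hsurj I).symm
  rw [hI, ← Ideal.span_singleton_generator J, Ideal.map_span, Set.image_singleton]
  have hassoc' : Associated
      (Ideal.Quotient.mk (Ideal.span {(X : K[X]) ^ k}) (Submodule.IsPrincipal.generator J))
      ((xi K k) ^ j) := by
    have := hassoc.map (Ideal.Quotient.mk (Ideal.span {(X : K[X]) ^ k}))
    simpa [xi, map_pow] using this
  apply le_antisymm
  · rw [Ideal.span_singleton_le_span_singleton]
    exact hassoc'.symm.dvd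
  · rw [Ideal.span_singleton_le_span_singleton]
    exact hassoc'.dvd

lemma baer_self : Module.Baer (TR K k) (TR K k) := by
  intro I g
  obtain ⟨j, hj, rfl⟩ := ideal_eq K k I
  have hx : (xi K k) ^ j ∈ Ideal.span {(xi K k) ^ j} := Ideal.mem_span_singleton_self _
  set a := g ⟨(xi K k) ^ j, hx⟩ with ha
  have h0 : (xi K k) ^ (k - j) * a = 0 := by
    have hsm : (xi K k) ^ (k - j) • (⟨(xi K k) ^ j, hx⟩ : Ideal.span {(xi K k) ^ j}) = 0 := by
      apply Subtype.ext
      show (xi K k) ^ (k - j) • (xi K k) ^ j = 0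
      rw [smul_eq_mul, ← pow_add, Nat.sub_add_cancel hj, xi_pow]
    calc (xi K k) ^ (k - j) * a = (xi K k) ^ (k - j) • a := rfl
      _ = g ((xi K k) ^ (k - j) • ⟨(xi K k) ^ j, hx⟩) := (map_smul g _ _).symm
      _ = g 0 := by rw [hsm]
      _ = 0 := map_zero g
  obtain ⟨b, hb⟩ := Ideal.mem_span_singleton'.mp (mem_span_of_ann K k hj h0)
  refine ⟨LinearMap.toSpanSingleton _ _ b, fun x hxI => ?_⟩
  obtain ⟨c, hc⟩ := Ideal.mem_span_singleton'.mp hxI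
  have hxc : (⟨x, hxI⟩ : Ideal.span {(xi K k) ^ j}) = c • ⟨(xi K k) ^ j, hx⟩ := by
    apply Subtype.ext
    rw [SetLike.val_smul, smul_eq_mul, hc]
  rw [hxc, map_smul, ← ha, ← hb]
  show x • b = c • (b * (xi K k) ^ j)
  rw [← hc, smul_eq_mul, smul_eq_mul]
  ring

lemma baer_pi (ι : Type*) : Module.Baer (TR K k) (ι → TR K k) := by
  intro I g
  choose g' hg' using fun i => baer_self K k I ((LinearMap.proj i).comp g)
  exact ⟨LinearMap.pi g', fun x hx => funext fun i => hg' i x hx⟩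

lemma isLocal (hk : 1 ≤ k) : IsLocalRing (TR K k) := by
  have hne : Ideal.span {(X : K[X]) ^ k} ≠ ⊤ := by
    rw [Ne, Ideal.span_singleton_eq_top]
    intro h
    exact Polynomial.not_isUnit_X ((isUnit_pow_iff (Nat.one_le_iff_ne_zero.mp hk)).mp h)
  haveI : Nontrivial (TR K k) := Ideal.Quotient.nontrivial_iff.mpr hne
  have hXnil : ∀ q : K[X], IsNilpotent (Ideal.Quotient.mk (Ideal.span {(X : K[X]) ^ k}) (X * q)) :=
    fun q => ⟨k, by rw [map_mul, mul_pow, ← map_pow]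
                    show (xi K k) ^ k * _ = 0
                    rw [xi_pow]; exact zero_mul _⟩
  apply IsLocalRing.of_isUnit_or_isUnit_one_sub_self
  intro a
  obtain ⟨p, rfl⟩ := Ideal.Quotient.mk_surjective a
  by_cases hc : p.coeff 0 = 0
  · right
    have hp : Ideal.Quotient.mk (Ideal.span {(X : K[X]) ^ k}) p =
        Ideal.Quotient.mk _ (X * p.divX) := by
      conv_lhs => rw [← X_mul_divX_add p, hc, map_zero, add_zero]
    rw [hp]
    exact (hXnil p.divX).isUnit_one_sub
  · left
    have hp : Ideal.Quotient.mk (Ideal.span {(X : K[X]) ^ k}) p =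
        Ideal.Quotient.mk _ (X * p.divX) + Ideal.Quotient.mk _ (C (p.coeff 0)) := by
      rw [← map_add, X_mul_divX_add]
    rw [hp]
    exact (hXnil p.divX).isUnit_add_right_of_commute
      ((Polynomial.isUnit_C.mpr (isUnit_iff_ne_zero.mpr hc)).map
        (Ideal.Quotient.mk (Ideal.span {(X : K[X]) ^ k}))) (Commute.all _ _)

lemma free_of_retract (hk : 1 ≤ k) (m : ℕ) (p : Submodule (TR K k) (Fin m → TR K k))
    (ρ : (Fin m → TR K k) →ₗ[TR K k] p) (hρ : ∀ x : p, ρ x = x) :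
    Module.Free (TR K k) p := by
  haveI : IsLocalRing (TR K k) := isLocal K k hk
  haveI : Module.Projective (TR K k) p :=
    Module.Projective.of_split p.subtype ρ (LinearMap.ext fun x => hρ x)
  haveI : Module.Finite (TR K k) p := Module.Finite.iff_fg.mpr (IsNoetherian.noetherian p)
  haveI : Module.FinitePresentation (TR K k) p := Module.finitePresentation_of_finite _ _
  exact Module.free_of_flat_of_isLocalRing

end Stmt8Aux

/-- Let `R = K[x]/(x^k)` and let `U` be a submodule of the finite
free `R`-module `M = R^m`. Then `U` is free as an `R`-module if and only if
`M/U` is free as an `R`-module. -/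
theorem stmt_8 (K : Type*) [Field K] (k : ℕ) (hk : 1 ≤ k) (m : ℕ)
    (U : Submodule (K[X] ⧸ Ideal.span {(X : K[X]) ^ k})
      (Fin m → (K[X] ⧸ Ideal.span {(X : K[X]) ^ k}))) :
    Module.Free (K[X] ⧸ Ideal.span {(X : K[X]) ^ k}) U ↔
      Module.Free (K[X] ⧸ Ideal.span {(X : K[X]) ^ k})
        ((Fin m → (K[X] ⧸ Ideal.span {(X : K[X]) ^ k})) ⧸ U) := by
  set R := K[X] ⧸ Ideal.span {(X : K[X]) ^ k} with hR
  constructor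
  · intro hU
    haveI := hU
    haveI : Module.Finite R U := Module.Finite.iff_fg.mpr (IsNoetherian.noetherian U)
    let ι := Module.Free.ChooseBasisIndex R U
    let e : U ≃ₗ[R] (ι → R) := (Module.Free.chooseBasis R U).equivFun
    obtain ⟨h, hh⟩ := (Stmt8Aux.baer_pi K k ι).extension_property U.subtype
      (Submodule.injective_subtype U) e.toLinearMap
    let σ : (Fin m → R) →ₗ[R] U := e.symm.toLinearMap ∘ₗ h
    have hσ : ∀ u : U, σ u = u := fun u => by
      have h1 : h (U.subtype u) = e u := LinearMap.congr_fun hh u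
      show e.symm (h (U.subtype u)) = u
      rw [h1, LinearEquiv.symm_apply_apply]
    have hcompl : IsCompl U (LinearMap.ker σ) := LinearMap.isCompl_of_proj hσ
    have hfree : Module.Free R (LinearMap.ker σ) :=
      Stmt8Aux.free_of_retract K k hk m (LinearMap.ker σ)
        ((LinearMap.ker σ).linearProjOfIsCompl U hcompl.symm)
        (fun x => Submodule.linearProjOfIsCompl_apply_left _ x)
    exact hfree.of_equiv' ((Submodule.quotientEquivOfIsCompl U (LinearMap.ker σ) hcompl).symm)
  · intro hQ
    haveI := hQ
    obtain ⟨s, hs⟩ := Module.projective_lifting_property U.mkQ LinearMap.id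
      (Submodule.mkQ_surjective U)
    let π : (Fin m → R) →ₗ[R] (Fin m → R) := LinearMap.id - s ∘ₗ U.mkQ
    have hmem : ∀ x, π x ∈ U := fun x => by
      have h1 : U.mkQ (π x) = 0 := by
        have h2 : U.mkQ (s (U.mkQ x)) = U.mkQ x := LinearMap.congr_fun hs (U.mkQ x)
        show U.mkQ (x - s (U.mkQ x)) = 0
        rw [map_sub, h2, sub_self]
      rwa [← Submodule.Quotient.mk_eq_zero, ← Submodule.mkQ_apply]
    let ρ : (Fin m → R) →ₗ[R] U := π.codRestrict U hmem
    have hρ : ∀ u : U, ρ u = u := fun u => Subtype.ext (by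
      have h0 : U.mkQ (u : Fin m → R) = 0 := (Submodule.Quotient.mk_eq_zero U).mpr u.2
      show π (u : Fin m → R) = (u : Fin m → R)
      show (u : Fin m → R) - s (U.mkQ (u : Fin m → R)) = (u : Fin m → R)
      rw [h0, map_zero, sub_zero])
    exact Stmt8Aux.free_of_retract K k hk m U ρ hρ
end
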